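/- arXiv:2506.16295 — 4 statements merged into one kernel-verified Lean document; each statement's English description precedes it below -/
import Mathlib

section
/- Let P be a finite set, d a metric on P, p a probability mass function on P, and L ≥ 1. Then the infimum over all probability mass functions q on P supported on at most L points of the Wasserstein distance W_d(p,q) equals the minimum over all L-tuples (ρ_1,…,ρ_L) ∈ P^L of the quantity ∑_{ρ∈P} p(ρ) · min_{1≤ℓ≤L} d(ρ, ρ_ℓ). -/
open scoped Classical

/-- `p` is a probability mass function on the finite type `α`. -/
def IsPMF {α : Type*} [Fintype α] (p : α → ℝ) : Prop :=
  (∀ x, 0 ≤ p x) ∧ ∑ x, p x = 1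

/-- `J` is a coupling of the pmfs `p` and `q`. -/
def IsCoupling {α : Type*} [Fintype α] (p q : α → ℝ) (J : α → α → ℝ) : Prop :=
  (∀ x y, 0 ≤ J x y) ∧ (∀ x, ∑ y, J x y = p x) ∧ (∀ y, ∑ x, J x y = q y)

/-- The Wasserstein distance between `p` and `q` with ground cost `d`:
the infimum over couplings of the total transport cost. -/
noncomputable def Wass {α : Type*} [Fintype α] (d : α → α → ℝ) (p q : α → ℝ) : ℝ :=
  sInf { c : ℝ | ∃ J : α → α → ℝ, IsCoupling p q J ∧ c = ∑ x, ∑ y, d x y * J x y }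

/-- `d` is a metric on `α`. -/
def IsMetric {α : Type*} (d : α → α → ℝ) : Prop :=
  (∀ x y, d x y = 0 ↔ x = y) ∧ (∀ x y, d x y = d y x) ∧
    (∀ x y z, d x z ≤ d x y + d y z)

lemma metric_nonneg {α : Type*} {d : α → α → ℝ} (hd : IsMetric d) (x y : α) :
    0 ≤ d x y := by
  have h0 : d x x = 0 := (hd.1 x x).mpr rfl
  have := hd.2.2 x y x
  rw [h0, hd.2.1 y x] at this
  linarith

lemma prod_coupling {α : Type*} [Fintype α] {p q : α → ℝ} (hp : IsPMF p) (hq : IsPMF q) :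
    IsCoupling p q (fun x y => p x * q y) := by
  refine ⟨fun x y => mul_nonneg (hp.1 x) (hq.1 y), fun x => ?_, fun y => ?_⟩
  · rw [← Finset.mul_sum, hq.2, mul_one]
  · rw [← Finset.sum_mul, hp.2, one_mul]

lemma costSet_nonempty {α : Type*} [Fintype α] (d : α → α → ℝ) {p q : α → ℝ}
    (hp : IsPMF p) (hq : IsPMF q) :
    Set.Nonempty { c : ℝ | ∃ J : α → α → ℝ, IsCoupling p q J ∧ c = ∑ x, ∑ y, d x y * J x y } :=
  ⟨_, fun x y => p x * q y, prod_coupling hp hq, rfl⟩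

lemma wass_nonneg {α : Type*} [Fintype α] {d : α → α → ℝ} (hd : IsMetric d)
    {p q : α → ℝ} (hp : IsPMF p) (hq : IsPMF q) : 0 ≤ Wass d p q := by
  apply le_csInf (costSet_nonempty d hp hq)
  rintro c ⟨J, hJ, rfl⟩
  exact Finset.sum_nonneg fun x _ => Finset.sum_nonneg fun y _ =>
    mul_nonneg (metric_nonneg hd x y) (hJ.1 x y)

/-- Lower bound: if `q` is supported on the range of `c`, the tuple cost bounds `Wass`. -/
lemma wass_lower {α : Type*} [Fintype α] {d : α → α → ℝ} (hd : IsMetric d)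
    {p q : α → ℝ} (hp : IsPMF p) (hq : IsPMF q) {L : ℕ} (hL : 1 ≤ L) (c : Fin L → α)
    (hsupp : ∀ y, q y ≠ 0 → ∃ ℓ, c ℓ = y) :
    ∑ ρ, p ρ * Finset.univ.inf' ⟨⟨0, hL⟩, Finset.mem_univ _⟩ (fun ℓ => d ρ (c ℓ)) ≤
      Wass d p q := by
  apply le_csInf (costSet_nonempty d hp hq)
  rintro w ⟨J, hJ, rfl⟩
  have key : ∀ x, p x * Finset.univ.inf' ⟨⟨0, hL⟩, Finset.mem_univ _⟩ (fun ℓ => d x (c ℓ)) ≤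
      ∑ y, d x y * J x y := by
    intro x
    have h1 : p x * Finset.univ.inf' ⟨⟨0, hL⟩, Finset.mem_univ _⟩ (fun ℓ => d x (c ℓ)) =
        ∑ y, Finset.univ.inf' ⟨⟨0, hL⟩, Finset.mem_univ _⟩ (fun ℓ => d x (c ℓ)) * J x y := by
      rw [← Finset.mul_sum, hJ.2.1 x, mul_comm]
    rw [h1]
    apply Finset.sum_le_sum
    intro y _
    by_cases hJxy : J x y = 0
    · simp [hJxy]
    · have hqy : q y ≠ 0 := by
        intro h0
        have := hJ.2.2 y
        rw [h0] at this
        have : ∀ x' ∈ Finset.univ, J x' y = 0 :=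
          (Finset.sum_eq_zero_iff_of_nonneg (fun x' _ => hJ.1 x' y)).mp this
        exact hJxy (this x (Finset.mem_univ x))
      obtain ⟨ℓ, hℓ⟩ := hsupp y hqy
      apply mul_le_mul_of_nonneg_right _ (hJ.1 x y)
      calc Finset.univ.inf' ⟨⟨0, hL⟩, Finset.mem_univ _⟩ (fun ℓ => d x (c ℓ)) ≤
          d x (c ℓ) := Finset.inf'_le _ (Finset.mem_univ ℓ)
        _ = d x y := by rw [hℓ]
  exact Finset.sum_le_sum fun x _ => key x

/-- Upper bound: for any tuple `c` there is a pmf supported on its range approximating `p`. -/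
lemma wass_upper {α : Type*} [Fintype α] [Nonempty α] {d : α → α → ℝ} (hd : IsMetric d)
    {p : α → ℝ} (hp : IsPMF p) {L : ℕ} (hL : 1 ≤ L) (c : Fin L → α) :
    ∃ q : α → ℝ, IsPMF q ∧
      (∃ s : Finset α, s.card ≤ L ∧ ∀ x, q x ≠ 0 → x ∈ s) ∧
      Wass d p q ≤
        ∑ ρ, p ρ * Finset.univ.inf' ⟨⟨0, hL⟩, Finset.mem_univ _⟩ (fun ℓ => d ρ (c ℓ)) := by
  have hex : ∀ x : α, ∃ ℓ : Fin L,
      Finset.univ.inf' ⟨⟨0, hL⟩, Finset.mem_univ _⟩ (fun ℓ => d x (c ℓ)) = d x (c ℓ) := by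
    intro x
    obtain ⟨ℓ, _, h⟩ := Finset.exists_mem_eq_inf'
      (⟨⟨0, hL⟩, Finset.mem_univ _⟩ : (Finset.univ : Finset (Fin L)).Nonempty)
      (fun ℓ => d x (c ℓ))
    exact ⟨ℓ, h⟩
  choose g hg using hex
  set f : α → α := fun x => c (g x) with hf
  set q : α → ℝ := fun y => ∑ x ∈ Finset.univ.filter (fun x => f x = y), p x with hq
  have hqpmf : IsPMF q := by
    constructor
    · intro y; exact Finset.sum_nonneg fun x _ => hp.1 x
    · rw [hq]
      simpa using (Finset.sum_fiberwise Finset.univ f p).trans hp.2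
  refine ⟨q, hqpmf, ⟨Finset.image c Finset.univ, ?_, ?_⟩, ?_⟩
  · calc (Finset.image c Finset.univ).card ≤ (Finset.univ : Finset (Fin L)).card :=
        Finset.card_image_le
      _ = L := by simp
  · intro y hy
    rw [hq] at hy
    have : ∃ x ∈ Finset.univ.filter (fun x => f x = y), p x ≠ 0 := by
      by_contra h
      push_neg at h
      exact hy (Finset.sum_eq_zero fun x hx => h x hx)
    obtain ⟨x, hx, _⟩ := this
    have hfx : f x = y := (Finset.mem_filter.mp hx).2
    exact hfx ▸ Finset.mem_image_of_mem c (Finset.mem_univ (g x))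
  · -- the deterministic coupling J x y = if f x = y then p x else 0
    set J : α → α → ℝ := fun x y => if f x = y then p x else 0 with hJdef
    have hJ : IsCoupling p q J := by
      refine ⟨fun x y => ?_, fun x => ?_, fun y => ?_⟩
      · rw [hJdef]; dsimp only; split <;> [exact hp.1 x; exact le_refl 0]
      · rw [hJdef]; simp
      · simp only [hJdef, hq, Finset.sum_filter]
      
    have hcost : ∑ x, ∑ y, d x y * J x y =
        ∑ ρ, p ρ * Finset.univ.inf' ⟨⟨0, hL⟩, Finset.mem_univ _⟩ (fun ℓ => d ρ (c ℓ)) := by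
      apply Finset.sum_congr rfl
      intro x _
      rw [hJdef]
      have : ∑ y, d x y * (if f x = y then p x else 0) =
          ∑ y, (if y = f x then d x y * p x else 0) := by
        apply Finset.sum_congr rfl
        intro y _
        rcases eq_or_ne (f x) y with h | h
        · simp [h]
        · rw [if_neg h, if_neg fun hh => h hh.symm, mul_zero]
      rw [this, Finset.sum_ite_eq' Finset.univ (f x) (fun y => d x y * p x)]
      simp [hg x, mul_comm]
      exact Or.inl rfl
    have hbdd : BddBelow { w : ℝ | ∃ J : α → α → ℝ, IsCoupling p q J ∧
        w = ∑ x, ∑ y, d x y * J x y } := by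
      refine ⟨0, ?_⟩
      rintro w ⟨J', hJ', rfl⟩
      exact Finset.sum_nonneg fun x _ => Finset.sum_nonneg fun y _ =>
        mul_nonneg (metric_nonneg hd x y) (hJ'.1 x y)
    calc Wass d p q ≤ ∑ x, ∑ y, d x y * J x y := csInf_le hbdd ⟨J, hJ, rfl⟩
      _ = _ := hcost

/-- The infimum over pmfs `q` supported on at most `L` points of `W_d(p,q)` equals the
minimum over `L`-tuples `(ρ_1, …, ρ_L)` of `∑_ρ p ρ · min_ℓ d (ρ, ρ_ℓ)`. -/
theorem wasserstein_approx_eq_min_over_tuples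
    {α : Type*} [Fintype α] [Nonempty α]
    (d : α → α → ℝ) (hd : IsMetric d)
    (p : α → ℝ) (hp : IsPMF p)
    (L : ℕ) (hL : 1 ≤ L) :
    sInf { w : ℝ | ∃ q : α → ℝ, IsPMF q ∧
        (∃ s : Finset α, s.card ≤ L ∧ ∀ x, q x ≠ 0 → x ∈ s) ∧
        w = Wass d p q } =
      Finset.univ.inf' Finset.univ_nonempty (fun c : Fin L → α =>
        ∑ ρ, p ρ * Finset.univ.inf' ⟨⟨0, hL⟩, Finset.mem_univ _⟩ (fun ℓ => d ρ (c ℓ))) := by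
  set F : (Fin L → α) → ℝ := fun c =>
    ∑ ρ, p ρ * Finset.univ.inf' ⟨⟨0, hL⟩, Finset.mem_univ _⟩ (fun ℓ => d ρ (c ℓ)) with hF
  set S : Set ℝ := { w : ℝ | ∃ q : α → ℝ, IsPMF q ∧
      (∃ s : Finset α, s.card ≤ L ∧ ∀ x, q x ≠ 0 → x ∈ s) ∧ w = Wass d p q } with hS
  -- pick optimal tuple
  obtain ⟨c₀, _, hc₀⟩ := Finset.exists_mem_eq_inf'
    (Finset.univ_nonempty : (Finset.univ : Finset (Fin L → α)).Nonempty) F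
  obtain ⟨q₀, hq₀pmf, hq₀supp, hq₀le⟩ := wass_upper hd hp hL c₀
  have hSne : S.Nonempty := ⟨Wass d p q₀, q₀, hq₀pmf, hq₀supp, rfl⟩
  have hSbdd : BddBelow S := by
    refine ⟨0, ?_⟩
    rintro w ⟨q, hq, _, rfl⟩
    exact wass_nonneg hd hp hq
  apply le_antisymm
  · calc sInf S ≤ Wass d p q₀ := csInf_le hSbdd ⟨q₀, hq₀pmf, hq₀supp, rfl⟩
      _ ≤ F c₀ := hq₀le
      _ = _ := hc₀.symm
  · apply le_csInf hSne
    rintro w ⟨q, hqpmf, ⟨s, hscard, hssupp⟩, rfl⟩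
    -- build a tuple c covering s
    set c : Fin L → α := fun ℓ =>
      if h : (ℓ : ℕ) < s.card then (s.equivFin.symm ⟨ℓ, h⟩ : α) else Classical.arbitrary α
      with hc
    have hcov : ∀ y, q y ≠ 0 → ∃ ℓ, c ℓ = y := by
      intro y hy
      have hys : y ∈ s := hssupp y hy
      set i := s.equivFin ⟨y, hys⟩ with hi
      have hlt : (i : ℕ) < L := lt_of_lt_of_le i.isLt hscard
      refine ⟨⟨i, hlt⟩, ?_⟩
      rw [hc]
      simp only [i.isLt, dif_pos]
      have : (⟨(⟨(i : ℕ), hlt⟩ : Fin L), i.isLt⟩ : Fin s.card) = i := by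
        apply Fin.ext; rfl
      rw [this, hi, Equiv.symm_apply_apply]
    calc Finset.univ.inf' Finset.univ_nonempty F ≤ F c :=
        Finset.inf'_le F (Finset.mem_univ c)
      _ ≤ Wass d p q := wass_lower hd hp hqpmf hL c hcov
end

section
/- Let P be a finite set, d a metric on P, p a probability mass function on P, and ρ_1,…,ρ_L ∈ P distinct points. Then the minimum over weight vectors w ∈ ℝ^L with w_ℓ ≥ 0 and ∑_{ℓ=1}^L w_ℓ = 1 of the Wasserstein distance W_d(p, ∑_{ℓ=1}^L w_ℓ δ_{ρ_ℓ}) equals ∑_{ρ∈P} p(ρ) · min_{1≤ℓ≤L} d(ρ, ρ_ℓ). -/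
open scoped Classical

/-- For fixed distinct atoms `c 0, …, c (L-1)`, the minimum over weight vectors `w` in the
simplex of `W_d(p, ∑_ℓ w_ℓ δ_{c ℓ})` equals `∑_ρ p ρ · min_ℓ d (ρ, c ℓ)` (and is attained). -/
theorem min_wasserstein_over_weights_eq
    {α : Type*} [Fintype α] [Nonempty α]
    (d : α → α → ℝ) (hd : IsMetric d)
    (p : α → ℝ) (hp : IsPMF p)
    (L : ℕ) (hL : 1 ≤ L)
    (c : Fin L → α) (hinj : Function.Injective c) :
    IsLeast { v : ℝ | ∃ w : Fin L → ℝ, (∀ ℓ, 0 ≤ w ℓ) ∧ (∑ ℓ, w ℓ = 1) ∧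
        v = Wass d p (fun x => ∑ ℓ, w ℓ * (if x = c ℓ then 1 else 0)) }
      (∑ ρ, p ρ * Finset.univ.inf' ⟨⟨0, hL⟩, Finset.mem_univ _⟩ (fun ℓ => d ρ (c ℓ))) := by
  classical
  have ne : (Finset.univ : Finset (Fin L)).Nonempty := ⟨⟨0, hL⟩, Finset.mem_univ _⟩
  set m : α → ℝ := fun x => Finset.univ.inf' ne (fun ℓ => d x (c ℓ)) with hm
  have htarget : (∑ ρ, p ρ * Finset.univ.inf' ⟨⟨0, hL⟩, Finset.mem_univ _⟩
      (fun ℓ => d ρ (c ℓ))) = ∑ ρ, p ρ * m ρ := rfl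
  rw [htarget]
  -- every coupling of p with a measure supported on the atoms costs at least the target
  have hlb : ∀ w : Fin L → ℝ, ∀ J : α → α → ℝ,
      IsCoupling p (fun x => ∑ ℓ, w ℓ * (if x = c ℓ then 1 else 0)) J →
      (∑ ρ, p ρ * m ρ) ≤ ∑ x, ∑ y, d x y * J x y := by
    intro w J ⟨hJ0, hJ1, hJ2⟩
    have step : ∀ x y, m x * J x y ≤ d x y * J x y := by
      intro x y
      rcases eq_or_lt_of_le (hJ0 x y) with h | h
      · rw [← h]; simp
      · -- J x y > 0, so y is an atom
        have hy : ∃ ℓ, y = c ℓ := by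
          by_contra hcon
          push_neg at hcon
          have : (∑ ℓ, w ℓ * (if y = c ℓ then 1 else 0)) = 0 := by
            apply Finset.sum_eq_zero; intro ℓ _
            simp [hcon ℓ]
          have hsum : ∑ x, J x y = 0 := by rw [hJ2 y]; exact this
          have : J x y = 0 := by
            have := (Finset.sum_eq_zero_iff_of_nonneg
              (fun i _ => hJ0 i y)).mp hsum x (Finset.mem_univ x)
            exact this
          linarith
        obtain ⟨ℓ, rfl⟩ := hy
        have : m x ≤ d x (c ℓ) := Finset.inf'_le _ (Finset.mem_univ ℓ)
        exact mul_le_mul_of_nonneg_right this (le_of_lt h)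
    calc ∑ ρ, p ρ * m ρ = ∑ x, ∑ y, m x * J x y := by
          apply Finset.sum_congr rfl; intro x _
          rw [← Finset.mul_sum, hJ1 x, mul_comm]
      _ ≤ ∑ x, ∑ y, d x y * J x y :=
          Finset.sum_le_sum fun x _ => Finset.sum_le_sum fun y _ => step x y
  -- coupling sets are nonempty (product coupling)
  have hne : ∀ w : Fin L → ℝ, (∀ ℓ, 0 ≤ w ℓ) → (∑ ℓ, w ℓ = 1) →
      { v : ℝ | ∃ J : α → α → ℝ,
        IsCoupling p (fun x => ∑ ℓ, w ℓ * (if x = c ℓ then 1 else 0)) J ∧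
        v = ∑ x, ∑ y, d x y * J x y }.Nonempty := by
    intro w hw0 hw1
    set q : α → ℝ := fun x => ∑ ℓ, w ℓ * (if x = c ℓ then 1 else 0) with hq
    have hqsum : ∑ y, q y = 1 := by
      rw [Finset.sum_comm]
      calc ∑ ℓ, ∑ y, w ℓ * (if y = c ℓ then 1 else 0)
          = ∑ ℓ, w ℓ := by
            apply Finset.sum_congr rfl; intro ℓ _
            rw [← Finset.mul_sum]
            simp
        _ = 1 := hw1
    refine ⟨_, ⟨fun x y => p x * q y, ⟨?_, ?_, ?_⟩, rfl⟩⟩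
    · intro x y
      exact mul_nonneg (hp.1 x) (Finset.sum_nonneg fun ℓ _ =>
        mul_nonneg (hw0 ℓ) (by positivity))
    · intro x; rw [← Finset.mul_sum, hqsum, mul_one]
    · intro y; rw [← Finset.sum_mul, hp.2, one_mul]
  have hwlb : ∀ w : Fin L → ℝ, (∀ ℓ, 0 ≤ w ℓ) → (∑ ℓ, w ℓ = 1) →
      (∑ ρ, p ρ * m ρ) ≤ Wass d p (fun x => ∑ ℓ, w ℓ * (if x = c ℓ then 1 else 0)) := by
    intro w hw0 hw1
    apply le_csInf (hne w hw0 hw1)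
    rintro v ⟨J, hJ, rfl⟩
    exact hlb w J hJ
  constructor
  · -- membership: choose the nearest-atom weights
    -- selector: nearest atom
    have hsel : ∀ x : α, ∃ ℓ : Fin L, m x = d x (c ℓ) := by
      intro x
      obtain ⟨ℓ, _, hℓ⟩ := Finset.exists_mem_eq_inf' ne (fun ℓ => d x (c ℓ))
      exact ⟨ℓ, hℓ⟩
    choose sel hselspec using hsel
    set w : Fin L → ℝ := fun ℓ => ∑ x, p x * (if sel x = ℓ then 1 else 0) with hwdef
    have hw0 : ∀ ℓ, 0 ≤ w ℓ := fun ℓ =>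
      Finset.sum_nonneg fun x _ => mul_nonneg (hp.1 x) (by positivity)
    have hw1 : ∑ ℓ, w ℓ = 1 := by
      rw [hwdef, Finset.sum_comm]
      calc ∑ x, ∑ ℓ, p x * (if sel x = ℓ then 1 else 0)
          = ∑ x, p x := by
            apply Finset.sum_congr rfl; intro x _
            rw [← Finset.mul_sum]
            simp
        _ = 1 := hp.2
    set q : α → ℝ := fun x => ∑ ℓ, w ℓ * (if x = c ℓ then 1 else 0) with hq
    set J : α → α → ℝ := fun x y => p x * (if y = c (sel x) then 1 else 0) with hJdef
    have hJcoup : IsCoupling p q J := by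
      refine ⟨fun x y => mul_nonneg (hp.1 x) (by positivity), ?_, ?_⟩
      · intro x
        rw [hJdef]
        simp [← Finset.mul_sum]
      · intro y
        rw [hq, hJdef]
        simp only [hwdef, Finset.sum_mul]
        rw [Finset.sum_comm]
        apply Finset.sum_congr rfl
        intro x _
        simp only [mul_ite, ite_mul, mul_one, mul_zero, zero_mul, mul_assoc,
          Finset.mul_sum]
        have hsw : ∀ ℓ : Fin L, (if y = c ℓ then if sel x = ℓ then p x else 0 else 0)
            = (if sel x = ℓ then (if y = c ℓ then p x else 0) else 0) := by
          intro ℓ; by_cases h1 : y = c ℓ <;> by_cases h2 : sel x = ℓ <;> simp [h1, h2]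
        rw [Finset.sum_congr rfl fun ℓ _ => hsw ℓ, Finset.sum_ite_eq]
        simp
    have hcost : ∑ x, ∑ y, d x y * J x y = ∑ ρ, p ρ * m ρ := by
      apply Finset.sum_congr rfl
      intro x _
      rw [hJdef]
      simp only [mul_ite, mul_one, mul_zero, mul_comm (d x _) (p x)]
      rw [Finset.sum_ite_eq' Finset.univ (c (sel x)) (fun y => p x * d x y)]
      simp [← hselspec x]
    refine ⟨w, hw0, hw1, ?_⟩
    apply le_antisymm
    · exact hwlb w hw0 hw1
    · apply csInf_le
      · exact ⟨∑ ρ, p ρ * m ρ, by rintro v ⟨K, hK, rfl⟩; exact hlb w K hK⟩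
      · exact ⟨J, hJcoup, hcost.symm⟩
  · rintro v ⟨w, hw0, hw1, rfl⟩
    exact hwlb w hw0 hw1
end

section
/- Fix n ≥ 1 and let ρ1, ρ2, ρ3 be partitions of [n] such that ρ1 ≤ ρ2 ≤ ρ3 in the refinement order (i.e., every cluster of ρ1 is contained in a cluster of ρ2, and every cluster of ρ2 is contained in a cluster of ρ3). Then the variation of information is vertically aligned: VI(ρ1,ρ3) = VI(ρ1,ρ2) + VI(ρ2,ρ3). -/
open scoped Classical

/-- The cluster of `ρ` containing `i`, where a partition of `{1,…,n}` is represented by the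
equivalence relation (`Setoid`) whose classes are the clusters. -/
noncomputable def cluster {n : ℕ} (ρ : Setoid (Fin n)) (i : Fin n) : Finset (Fin n) :=
  Finset.univ.filter (fun j => ρ.r i j)

/-- The pointwise contribution of `i` to the variation of information between `ρ1` and `ρ2`. -/
noncomputable def VIC {n : ℕ} (ρ1 ρ2 : Setoid (Fin n)) (i : Fin n) : ℝ :=
  (1 / (n : ℝ)) * (Real.logb 2 (((cluster ρ1 i).card : ℝ) / n) +
    Real.logb 2 (((cluster ρ2 i).card : ℝ) / n) -
    2 * Real.logb 2 (((cluster ρ1 i ∩ cluster ρ2 i).card : ℝ) / n))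

/-- The variation of information between the partitions `ρ1` and `ρ2`. -/
noncomputable def VI {n : ℕ} (ρ1 ρ2 : Setoid (Fin n)) : ℝ :=
  ∑ i, VIC ρ1 ρ2 i

/-- Vertical alignment of the VI: if `ρ1 ≤ ρ2 ≤ ρ3` in the refinement order (every cluster of
`ρ1` is contained in a cluster of `ρ2`, and every cluster of `ρ2` in a cluster of `ρ3`), then
`VI(ρ1, ρ3) = VI(ρ1, ρ2) + VI(ρ2, ρ3)`. -/
theorem vi_vertically_aligned {n : ℕ} (hn : 1 ≤ n) (ρ1 ρ2 ρ3 : Setoid (Fin n))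
    (h12 : ∀ i j, ρ1.r i j → ρ2.r i j) (h23 : ∀ i j, ρ2.r i j → ρ3.r i j) :
    VI ρ1 ρ3 = VI ρ1 ρ2 + VI ρ2 ρ3 := by
  have hsub : ∀ (σ τ : Setoid (Fin n)), (∀ i j, σ.r i j → τ.r i j) →
      ∀ i, cluster σ i ∩ cluster τ i = cluster σ i := by
    intro σ τ h i
    apply Finset.inter_eq_left.2
    intro j hj
    simp only [cluster, Finset.mem_filter, Finset.mem_univ, true_and] at hj ⊢
    exact h _ _ hj
  have h13 : ∀ i j, ρ1.r i j → ρ3.r i j := fun i j h => h23 _ _ (h12 _ _ h)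
  unfold VI
  rw [← Finset.sum_add_distrib]
  apply Finset.sum_congr rfl
  intro i _
  unfold VIC
  rw [hsub ρ1 ρ2 h12 i, hsub ρ1 ρ3 h13 i, hsub ρ2 ρ3 h23 i]
  ring
end

section
/- Fix n ≥ 1. For any two partitions ρ1, ρ2 of [n], the variation of information is bounded above by the base-2 logarithm of n: VI(ρ1,ρ2) ≤ log2(n). -/
open scoped Classical

lemma mem_cluster {n : ℕ} (ρ : Setoid (Fin n)) (i j : Fin n) :
    j ∈ cluster ρ i ↔ ρ.r i j := by simp [cluster]

lemma self_mem_cluster {n : ℕ} (ρ : Setoid (Fin n)) (i : Fin n) :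
    i ∈ cluster ρ i := (mem_cluster ρ i i).2 (Setoid.refl i)

lemma cluster_eq_of_rel {n : ℕ} (ρ : Setoid (Fin n)) {i j : Fin n} (h : ρ.r i j) :
    cluster ρ i = cluster ρ j := by
  ext k
  simp only [mem_cluster]
  exact ⟨fun h' => Setoid.trans (Setoid.symm h) h', fun h' => Setoid.trans h h'⟩

lemma rel_of_cluster_eq {n : ℕ} (ρ : Setoid (Fin n)) {i j : Fin n}
    (h : cluster ρ i = cluster ρ j) : ρ.r i j := by
  have := self_mem_cluster ρ j
  rw [← h, mem_cluster] at this
  exact this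

lemma cluster_eq_iff {n : ℕ} (ρ : Setoid (Fin n)) (i j : Fin n) :
    cluster ρ i = cluster ρ j ↔ ρ.r i j :=
  ⟨rel_of_cluster_eq ρ, cluster_eq_of_rel ρ⟩

/-- The clusters of a partition have total size `n`. -/
lemma sum_card_clusters {n : ℕ} (ρ : Setoid (Fin n)) :
    ∑ A ∈ Finset.univ.image (cluster ρ), (A.card : ℝ) = n := by
  have h := Finset.card_eq_sum_card_image (cluster ρ) (Finset.univ : Finset (Fin n))
  have h2 : ∀ A ∈ Finset.univ.image (cluster ρ),
      ({i ∈ (Finset.univ : Finset (Fin n)) | cluster ρ i = A}).card = A.card := by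
    intro A hA
    obtain ⟨i0, -, rfl⟩ := Finset.mem_image.1 hA
    congr 1
    ext j
    simp only [Finset.mem_filter, Finset.mem_univ, true_and, cluster_eq_iff, mem_cluster]
    exact ⟨fun h => Setoid.symm h, fun h => Setoid.symm h⟩
  have key : n = ∑ A ∈ Finset.univ.image (cluster ρ), A.card := by
    rw [Finset.sum_congr rfl h2] at h
    simpa using h
  rw [show ∑ A ∈ Finset.univ.image (cluster ρ), (A.card : ℝ)
      = ((∑ A ∈ Finset.univ.image (cluster ρ), A.card : ℕ) : ℝ) by push_cast; rfl, ← key]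

/-- Key combinatorial estimate: `∑ i, |C₁(i)|·|C₂(i)|/|C₁(i) ∩ C₂(i)| ≤ n²`. -/
lemma sum_ratio_le {n : ℕ} (ρ1 ρ2 : Setoid (Fin n)) :
    ∑ i : Fin n, ((cluster ρ1 i).card * (cluster ρ2 i).card : ℝ) /
      ((cluster ρ1 i ∩ cluster ρ2 i).card : ℝ) ≤ (n : ℝ) * n := by
  set g : Fin n → Finset (Fin n) × Finset (Fin n) :=
    fun i => (cluster ρ1 i, cluster ρ2 i) with hg
  set f : Fin n → ℝ := fun i => ((cluster ρ1 i).card * (cluster ρ2 i).card : ℝ) /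
      ((cluster ρ1 i ∩ cluster ρ2 i).card : ℝ) with hf
  have hmaps : ∀ x ∈ (Finset.univ : Finset (Fin n)), g x ∈ Finset.univ.image g :=
    fun x _ => Finset.mem_image_of_mem g (Finset.mem_univ x)
  rw [← Finset.sum_fiberwise_of_maps_to hmaps f]
  -- compute each fiber sum
  have hfib : ∀ p ∈ Finset.univ.image g,
      ∑ i ∈ ({i ∈ (Finset.univ : Finset (Fin n)) | g i = p}), f i
        = (p.1.card : ℝ) * p.2.card := by
    intro p hp
    obtain ⟨i0, -, rfl⟩ := Finset.mem_image.1 hp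
    have hfilter : {i ∈ (Finset.univ : Finset (Fin n)) | g i = g i0}
        = cluster ρ1 i0 ∩ cluster ρ2 i0 := by
      ext j
      simp only [Finset.mem_filter, Finset.mem_univ, true_and, hg, Prod.mk.injEq,
        Finset.mem_inter, mem_cluster, cluster_eq_iff]
      exact ⟨fun ⟨h1, h2⟩ => ⟨ρ1.symm' h1, ρ2.symm' h2⟩,
        fun ⟨h1, h2⟩ => ⟨ρ1.symm' h1, ρ2.symm' h2⟩⟩
    rw [hfilter]
    have hconst : ∀ j ∈ cluster ρ1 i0 ∩ cluster ρ2 i0, f j = f i0 := by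
      intro j hj
      rw [Finset.mem_inter, mem_cluster, mem_cluster] at hj
      simp only [hf]
      rw [cluster_eq_of_rel ρ1 (ρ1.symm' hj.1), cluster_eq_of_rel ρ2 (ρ2.symm' hj.2)]
    rw [Finset.sum_congr rfl hconst, Finset.sum_const, nsmul_eq_mul]
    have hcpos : (0 : ℝ) < ((cluster ρ1 i0 ∩ cluster ρ2 i0).card : ℝ) := by
      have : i0 ∈ cluster ρ1 i0 ∩ cluster ρ2 i0 :=
        Finset.mem_inter.2 ⟨self_mem_cluster _ _, self_mem_cluster _ _⟩
      exact_mod_cast Finset.card_pos.2 ⟨i0, this⟩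
    simp only [hf]
    field_simp
    rfl
  rw [Finset.sum_congr rfl hfib]
  -- bound by the full product set
  have hsubset : Finset.univ.image g ⊆
      (Finset.univ.image (cluster ρ1)) ×ˢ (Finset.univ.image (cluster ρ2)) := by
    intro p hp
    obtain ⟨i0, -, rfl⟩ := Finset.mem_image.1 hp
    exact Finset.mem_product.2 ⟨Finset.mem_image_of_mem _ (Finset.mem_univ i0),
      Finset.mem_image_of_mem _ (Finset.mem_univ i0)⟩
  calc ∑ p ∈ Finset.univ.image g, (p.1.card : ℝ) * p.2.card
      ≤ ∑ p ∈ (Finset.univ.image (cluster ρ1)) ×ˢ (Finset.univ.image (cluster ρ2)),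
          (p.1.card : ℝ) * p.2.card := by
        apply Finset.sum_le_sum_of_subset_of_nonneg hsubset
        intro p _ _
        positivity
    _ = (∑ A ∈ Finset.univ.image (cluster ρ1), (A.card : ℝ)) *
          (∑ B ∈ Finset.univ.image (cluster ρ2), (B.card : ℝ)) := by
        rw [Finset.sum_product]
        exact (Finset.sum_mul_sum (Finset.univ.image (cluster ρ1))
          (Finset.univ.image (cluster ρ2)) (fun A => (A.card : ℝ))
          (fun B => (B.card : ℝ))).symm
    _ = (n : ℝ) * n := by rw [sum_card_clusters, sum_card_clusters]

lemma log_decomp (N a b c : ℝ) (hN : 0 < N) (ha : 0 < a) (hb : 0 < b) (hc : 0 < c) :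
    Real.logb 2 (a / N) + Real.logb 2 (b / N) - 2 * Real.logb 2 (c / N)
      = Real.logb 2 (N / c) + Real.logb 2 (a * b / (N * c)) := by
  unfold Real.logb
  rw [Real.log_div ha.ne' hN.ne', Real.log_div hb.ne' hN.ne', Real.log_div hc.ne' hN.ne',
    Real.log_div hN.ne' hc.ne', Real.log_div (by positivity) (by positivity),
    Real.log_mul ha.ne' hb.ne', Real.log_mul hN.ne' hc.ne']
  ring

/-- The variation of information between any two partitions of `{1,…,n}` is at most `log2 n`. -/
theorem vi_le_logb_two {n : ℕ} (hn : 1 ≤ n) (ρ1 ρ2 : Setoid (Fin n)) :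
    VI ρ1 ρ2 ≤ Real.logb 2 n := by
  have hN : (0 : ℝ) < n := by exact_mod_cast Nat.lt_of_lt_of_le Nat.zero_lt_one hn
  set a : Fin n → ℝ := fun i => ((cluster ρ1 i).card : ℝ) with haa
  set b : Fin n → ℝ := fun i => ((cluster ρ2 i).card : ℝ) with hbb
  set c : Fin n → ℝ := fun i => ((cluster ρ1 i ∩ cluster ρ2 i).card : ℝ) with hcc
  have hc1 : ∀ i, (1 : ℝ) ≤ c i := by
    intro i
    have : i ∈ cluster ρ1 i ∩ cluster ρ2 i :=
      Finset.mem_inter.2 ⟨self_mem_cluster _ _, self_mem_cluster _ _⟩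
    have h1 : 1 ≤ (cluster ρ1 i ∩ cluster ρ2 i).card := Finset.card_pos.2 ⟨i, this⟩
    show (1 : ℝ) ≤ ((cluster ρ1 i ∩ cluster ρ2 i).card : ℝ)
    exact_mod_cast h1
  have ha1 : ∀ i, (1 : ℝ) ≤ a i := by
    intro i
    have h1 : 1 ≤ (cluster ρ1 i).card := Finset.card_pos.2 ⟨i, self_mem_cluster ρ1 i⟩
    show (1 : ℝ) ≤ ((cluster ρ1 i).card : ℝ)
    exact_mod_cast h1
  have hb1 : ∀ i, (1 : ℝ) ≤ b i := by
    intro i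
    have h1 : 1 ≤ (cluster ρ2 i).card := Finset.card_pos.2 ⟨i, self_mem_cluster ρ2 i⟩
    show (1 : ℝ) ≤ ((cluster ρ2 i).card : ℝ)
    exact_mod_cast h1
  have hcpos : ∀ i, (0 : ℝ) < c i := fun i => lt_of_lt_of_le one_pos (hc1 i)
  have hapos : ∀ i, (0 : ℝ) < a i := fun i => lt_of_lt_of_le one_pos (ha1 i)
  have hbpos : ∀ i, (0 : ℝ) < b i := fun i => lt_of_lt_of_le one_pos (hb1 i)
  -- pointwise bound
  have hstep : ∀ i, VIC ρ1 ρ2 i ≤ (1 / (n : ℝ)) * Real.logb 2 n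
      + (1 / (n : ℝ)) * Real.logb 2 (a i * b i / ((n : ℝ) * c i)) := by
    intro i
    have hd : VIC ρ1 ρ2 i = (1 / (n : ℝ)) * (Real.logb 2 ((n : ℝ) / c i)
        + Real.logb 2 (a i * b i / ((n : ℝ) * c i))) := by
      unfold VIC
      rw [log_decomp (n : ℝ) (a i) (b i) (c i) hN (hapos i) (hbpos i) (hcpos i)]
    rw [hd, mul_add]
    apply add_le_add_left
    apply mul_le_mul_of_nonneg_left _ (by positivity)
    have : (n : ℝ) / c i ≤ n := by
      rw [div_le_iff₀ (hcpos i)]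
      nlinarith [hc1 i]
    exact Real.logb_le_logb_of_le one_lt_two (div_pos hN (hcpos i)) this
  -- sum it up
  have hsum : VI ρ1 ρ2 ≤ ∑ i : Fin n, ((1 / (n : ℝ)) * Real.logb 2 n
      + (1 / (n : ℝ)) * Real.logb 2 (a i * b i / ((n : ℝ) * c i))) :=
    Finset.sum_le_sum fun i _ => hstep i
  have hsplit : ∑ i : Fin n, ((1 / (n : ℝ)) * Real.logb 2 n
      + (1 / (n : ℝ)) * Real.logb 2 (a i * b i / ((n : ℝ) * c i)))
      = Real.logb 2 n + (1 / (n : ℝ)) * ∑ i : Fin n,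
          Real.logb 2 (a i * b i / ((n : ℝ) * c i)) := by
    rw [Finset.sum_add_distrib, Finset.sum_const, ← Finset.mul_sum]
    simp only [Finset.card_univ, Fintype.card_fin, nsmul_eq_mul]
    field_simp
  -- show the second sum is nonpositive
  have hkey : ∑ i : Fin n, Real.logb 2 (a i * b i / ((n : ℝ) * c i)) ≤ 0 := by
    have hlogle : ∀ i : Fin n, Real.log (a i * b i / ((n : ℝ) * c i))
        ≤ a i * b i / ((n : ℝ) * c i) - 1 := by
      intro i
      exact Real.log_le_sub_one_of_pos
        (div_pos (mul_pos (hapos i) (hbpos i)) (mul_pos hN (hcpos i)))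
    have hts : ∑ i : Fin n, (a i * b i / ((n : ℝ) * c i)) ≤ n := by
      have : ∑ i : Fin n, (a i * b i / ((n : ℝ) * c i))
          = (∑ i : Fin n, a i * b i / c i) / n := by
        rw [Finset.sum_div]
        apply Finset.sum_congr rfl
        intro i _
        rw [div_div]
        ring_nf
      rw [this, div_le_iff₀ hN]
      calc ∑ i : Fin n, a i * b i / c i ≤ (n : ℝ) * n := sum_ratio_le ρ1 ρ2
        _ = (n : ℝ) * n := rfl
    have hlogsum : ∑ i : Fin n, Real.log (a i * b i / ((n : ℝ) * c i)) ≤ 0 := by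
      calc ∑ i : Fin n, Real.log (a i * b i / ((n : ℝ) * c i))
          ≤ ∑ i : Fin n, (a i * b i / ((n : ℝ) * c i) - 1) :=
            Finset.sum_le_sum fun i _ => hlogle i
        _ = (∑ i : Fin n, a i * b i / ((n : ℝ) * c i)) - n := by
            rw [Finset.sum_sub_distrib, Finset.sum_const]
            simp [Finset.card_univ]
        _ ≤ 0 := by linarith
    have : ∑ i : Fin n, Real.logb 2 (a i * b i / ((n : ℝ) * c i))
        = (∑ i : Fin n, Real.log (a i * b i / ((n : ℝ) * c i))) / Real.log 2 := by
      rw [Finset.sum_div]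
      rfl
    rw [this]
    exact div_nonpos_of_nonpos_of_nonneg hlogsum (Real.log_nonneg one_le_two)
  calc VI ρ1 ρ2 ≤ _ := hsum
    _ = Real.logb 2 n + (1 / (n : ℝ)) * ∑ i : Fin n,
          Real.logb 2 (a i * b i / ((n : ℝ) * c i)) := hsplit
    _ ≤ Real.logb 2 n + 0 := by
        apply add_le_add_right
        exact mul_nonpos_of_nonneg_of_nonpos (by positivity) hkey
    _ = Real.logb 2 n := add_zero _
end
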